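/- Let ν ∈ (0,1], let E := diag(ν², 1), let β₀ > 0, and let B ∈ ℝ^{2×2} satisfy xᵀBx ≥ β₀²‖x‖² for all x ∈ ℝ². For α ∈ ℝ define ‖U‖²_{1,α} := ∫₀^∞ e^{2αx}(U'(x)·E U'(x) + U(x)·B U(x)) dx and ‖f‖²_{0,α} := ∫₀^∞ e^{2αx}‖f(x)‖² dx. Then there exists a constant C > 0, depending only on β₀ and B (in particular independent of β, ν, f, g), such that for every β ∈ [0, β₀), every f : (0,∞) → ℝ² with ‖f‖_{0,β} < ∞, every g ∈ ℝ², and every twice continuously differentiable U : [0,∞) → ℝ² with −E U''(x) + B U(x) = f(x) for all x > 0, U(0) = g, and ‖U‖_{1,β} < ∞, one has ‖U‖_{1,β} ≤ C·(β₀ − β)^{-1}·(‖f‖_{0,β} + ‖g‖). -/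

import Mathlib

/-!
Put `s = β₀ - β` and lift the boundary value by `G(x) = e^{-(β₀+1)x} g`, so that `V = U - G`
vanishes at `0` and solves `-EV'' + BV = F` with `F = f + e^{-(β₀+1)x} w` for a fixed vector `w`.
The flux `Φ = e^{2βx} V·EV'` vanishes at `0` and
`Φ' = e^{2βx}(V'·EV' + V·BV) + e^{2βx}(2β V·EV' - V·F)`.
Young's inequality, with `B ≥ β₀²` and `B ≥ β₀² E`, absorbs the indefinite part and yields
`s² ∫₀^R e^{2βx}(V'·EV' + V·BV) ≤ s·e^{2βR}(V'·EV' + V·BV)(R) + ∫₀^∞ e^{2βx}|F|²`.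
The energy density is integrable, hence small for arbitrarily large `R`, so
`s² ‖V‖²_{1,β} ≤ ‖F‖²_{0,β}`. The weighted norms of `G` and of `e^{-(β₀+1)x} w` are explicit
multiples of `|g|²` because `2β - 2(β₀+1) ≤ -2`, and `C` depends on `B` only through
`β₀` and `∑ B_ij²`.
-/

open Matrix Set MeasureTheory

/-- The diagonal matrix `E = diag(ν², 1)`. -/
noncomputable def Emat (ν : ℝ) : Matrix (Fin 2) (Fin 2) ℝ := !![ν ^ 2, 0; 0, 1]

/-- The squared exponentially weighted norm
`‖W‖²_{1,α} = ∫₀^∞ e^{2αx}(W'·EW' + W·BW) dx` on the half line. -/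
noncomputable def wnormSq (ν : ℝ) (B : Matrix (Fin 2) (Fin 2) ℝ) (α : ℝ)
    (W W' : ℝ → Fin 2 → ℝ) : ℝ :=
  ∫ x in Ioi (0:ℝ),
    Real.exp (2 * α * x) * (W' x ⬝ᵥ (Emat ν *ᵥ W' x) + W x ⬝ᵥ (B *ᵥ W x))

open Filter

section VectorCalculus

variable {ι : Type*} [Fintype ι]

lemma dotProduct_self_nonneg (a : ι → ℝ) : 0 ≤ a ⬝ᵥ a :=
  Finset.sum_nonneg fun i _ => mul_self_nonneg (a i)

lemma add_dotProduct_mulVec_add_le {M : Matrix ι ι ℝ} (hM : ∀ z, 0 ≤ z ⬝ᵥ M *ᵥ z)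
    (a b : ι → ℝ) :
    (a + b) ⬝ᵥ M *ᵥ (a + b) ≤ 2 * (a ⬝ᵥ M *ᵥ a) + 2 * (b ⬝ᵥ M *ᵥ b) := by
  have := hM (a - b)
  simp only [mulVec_add, mulVec_sub, add_dotProduct, sub_dotProduct, dotProduct_add,
    dotProduct_sub] at *
  linarith

lemma sub_dotProduct_mulVec_sub_le {M : Matrix ι ι ℝ} (hM : ∀ z, 0 ≤ z ⬝ᵥ M *ᵥ z)
    (a b : ι → ℝ) :
    (a - b) ⬝ᵥ M *ᵥ (a - b) ≤ 2 * (a ⬝ᵥ M *ᵥ a) + 2 * (b ⬝ᵥ M *ᵥ b) := by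
  have := add_dotProduct_mulVec_add_le hM a (-b)
  rwa [← sub_eq_add_neg, mulVec_neg, neg_dotProduct, dotProduct_neg, neg_neg] at this

lemma two_mul_mul_dotProduct_mulVec_le {M : Matrix ι ι ℝ} (hsymm : M.IsSymm)
    (hM : ∀ z, 0 ≤ z ⬝ᵥ M *ᵥ z) (t : ℝ) (a b : ι → ℝ) :
    2 * t * (a ⬝ᵥ M *ᵥ b) ≤ t ^ 2 * (a ⬝ᵥ M *ᵥ a) + b ⬝ᵥ M *ᵥ b := by
  have hba : b ⬝ᵥ M *ᵥ a = a ⬝ᵥ M *ᵥ b := by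
    rw [dotProduct_mulVec, ← mulVec_transpose, hsymm.eq, dotProduct_comm]
  have := hM (t • a - b)
  simp only [mulVec_sub, mulVec_smul, sub_dotProduct, dotProduct_sub, smul_dotProduct,
    dotProduct_smul, hba, smul_eq_mul] at this
  linarith

lemma two_mul_mul_dotProduct_le (t : ℝ) (a b : ι → ℝ) :
    2 * t * (a ⬝ᵥ b) ≤ t ^ 2 * (a ⬝ᵥ a) + b ⬝ᵥ b := by
  classical
  simpa using two_mul_mul_dotProduct_mulVec_le isSymm_one
    (by simpa using dotProduct_self_nonneg) t a b

lemma add_dotProduct_add_le (a b : ι → ℝ) :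
    (a + b) ⬝ᵥ (a + b) ≤ 2 * (a ⬝ᵥ a) + 2 * (b ⬝ᵥ b) := by
  have := two_mul_mul_dotProduct_le 1 a b
  simp only [add_dotProduct, dotProduct_add, dotProduct_comm b a] at *
  linarith

lemma sub_dotProduct_sub_le (a b : ι → ℝ) :
    (a - b) ⬝ᵥ (a - b) ≤ 2 * (a ⬝ᵥ a) + 2 * (b ⬝ᵥ b) := by
  simpa [sub_eq_add_neg] using add_dotProduct_add_le a (-b)

lemma mulVec_dotProduct_mulVec_le (M : Matrix ι ι ℝ) (a : ι → ℝ) :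
    (M *ᵥ a) ⬝ᵥ (M *ᵥ a) ≤ (∑ i, ∑ j, M i j ^ 2) * (a ⬝ᵥ a) := by
  simp only [dotProduct, mulVec, ← sq]
  rw [Finset.sum_mul]
  exact Finset.sum_le_sum fun i _ => Finset.sum_mul_sq_le_sq_mul_sq Finset.univ (M i) a

lemma dotProduct_mulVec_le (M : Matrix ι ι ℝ) (a : ι → ℝ) :
    a ⬝ᵥ M *ᵥ a ≤ (1 + ∑ i, ∑ j, M i j ^ 2) / 2 * (a ⬝ᵥ a) := by
  have := two_mul_mul_dotProduct_le 1 a (M *ᵥ a)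
  have := mulVec_dotProduct_mulVec_le M a
  linarith

@[fun_prop]
lemma ContinuousOn.dotProduct {s : Set ℝ} {v w : ℝ → ι → ℝ} (hv : ContinuousOn v s)
    (hw : ContinuousOn w s) : ContinuousOn (fun x => v x ⬝ᵥ w x) s :=
  (continuous_fst.dotProduct continuous_snd).comp_continuousOn (hv.prodMk hw)

@[fun_prop]
lemma ContinuousOn.matrix_mulVec {s : Set ℝ} (M : Matrix ι ι ℝ) {w : ℝ → ι → ℝ}
    (hw : ContinuousOn w s) : ContinuousOn (fun x => M *ᵥ w x) s :=
  (continuous_const.matrix_mulVec continuous_id).comp_continuousOn hw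

lemma HasDerivAt.dotProduct {v w : ℝ → ι → ℝ} {v' w' : ι → ℝ} {x : ℝ}
    (hv : HasDerivAt v v' x) (hw : HasDerivAt w w' x) :
    HasDerivAt (fun y => v y ⬝ᵥ w y) (v' ⬝ᵥ w x + v x ⬝ᵥ w') x := by
  unfold _root_.dotProduct
  rw [← Finset.sum_add_distrib]
  exact .fun_sum fun i _ => (hasDerivAt_pi.1 hv i).fun_mul (hasDerivAt_pi.1 hw i)

lemma HasDerivAt.matrix_mulVec (M : Matrix ι ι ℝ) {w : ℝ → ι → ℝ} {w' : ι → ℝ} {x : ℝ}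
    (hw : HasDerivAt w w' x) : HasDerivAt (fun y => M *ᵥ w y) (M *ᵥ w') x :=
  (Matrix.mulVecLin M).toContinuousLinearMap.hasFDerivAt.comp_hasDerivAt x hw

lemma continuousOn_of_hasDerivAt {W W' : ℝ → ι → ℝ} (hW : ∀ x, 0 ≤ x → HasDerivAt W (W' x) x) :
    ContinuousOn W (Ici 0) :=
  fun x hx => (hW x hx).continuousAt.continuousWithinAt

lemma hasDerivAt_exp_mul_smul (c : ℝ) (v : ι → ℝ) (x : ℝ) :
    HasDerivAt (fun y => Real.exp (c * y) • v) (Real.exp (c * x) • c • v) x := by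
  have := (((hasDerivAt_id x).const_mul c).exp).smul_const v
  simpa [smul_smul, mul_comm] using this

end VectorCalculus

lemma frequently_lt_of_integrableOn_Ioi {h : ℝ → ℝ} {a ε : ℝ} (hint : IntegrableOn h (Ioi a))
    (hε : 0 < ε) : ∃ᶠ x in atTop, h x < ε := by
  by_contra hne
  simp only [not_frequently, not_lt] at hne
  obtain ⟨M, hM⟩ := eventually_atTop.1 hne
  have hconst : IntegrableOn (fun _ => ε) (Ioi (max M a)) := by
    refine (hint.mono_set (Ioi_subset_Ioi (le_max_right M a))).mono' aestronglyMeasurable_const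
      (ae_restrict_of_forall_mem measurableSet_Ioi fun x hx => ?_)
    rw [Real.norm_eq_abs, abs_of_pos hε]
    exact hM x (le_max_left M a |>.trans (mem_Ioi.1 hx).le)
  rcases (integrableOn_const_iff).1 hconst with h0 | hfin
  · simp [hε.ne'] at h0
  · simp at hfin

lemma mul_integral_Ioi_le_of_intervalIntegral_le {h : ℝ → ℝ} {a c K : ℝ}
    (hint : IntegrableOn h (Ioi 0)) (hle : ∀ R, 0 ≤ R → a * ∫ x in 0..R, h x ≤ c * h R + K) :
    a * ∫ x in Ioi 0, h x ≤ K := by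
  refine le_of_forall_pos_le_add fun ε hε => ?_
  have hlim := (intervalIntegral_tendsto_integral_Ioi 0 hint tendsto_id).const_mul a
  refine le_of_tendsto_of_frequently hlim ?_
  refine ((frequently_lt_of_integrableOn_Ioi (hint.const_mul c) hε).and_eventually
    (eventually_ge_atTop 0)).mono fun R ⟨hR, hR0⟩ => ?_
  rw [id]
  linarith [hle R hR0]

lemma integrableOn_Ioi_and_integral_le_of_le {h k₁ k₂ : ℝ → ℝ} (hc : ContinuousOn h (Ici 0))
    (h0 : ∀ x, 0 ≤ h x) (hk₁ : IntegrableOn k₁ (Ioi 0)) (hk₂ : IntegrableOn k₂ (Ioi 0))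
    (hle : ∀ x, 0 < x → h x ≤ 2 * k₁ x + 2 * k₂ x) :
    IntegrableOn h (Ioi 0) ∧
      ∫ x in Ioi 0, h x ≤ 2 * (∫ x in Ioi 0, k₁ x) + 2 * ∫ x in Ioi 0, k₂ x := by
  have hk := (hk₁.const_mul 2).add (hk₂.const_mul 2)
  have hint : IntegrableOn h (Ioi 0) :=
    hk.mono' ((hc.mono Ioi_subset_Ici_self).aestronglyMeasurable measurableSet_Ioi)
      (ae_restrict_of_forall_mem measurableSet_Ioi fun x hx => by
        rw [Real.norm_eq_abs, abs_of_nonneg (h0 x)]; exact hle x hx)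
  refine ⟨hint, ?_⟩
  calc ∫ x in Ioi 0, h x ≤ ∫ x in Ioi 0, (2 * k₁ x + 2 * k₂ x) :=
        setIntegral_mono_on hint hk measurableSet_Ioi hle
    _ = 2 * (∫ x in Ioi 0, k₁ x) + 2 * ∫ x in Ioi 0, k₂ x := by
        rw [integral_add (hk₁.const_mul 2) (hk₂.const_mul 2), integral_const_mul,
          integral_const_mul]

section WeightedEnergy

variable {ι : Type*} [Fintype ι]

/-- The integrand of `wnormSq`, with a general matrix `E` in place of `Emat ν`. -/
noncomputable def weightedEnergy (E B : Matrix ι ι ℝ) (β : ℝ) (W W' : ℝ → ι → ℝ) (x : ℝ) : ℝ :=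
  Real.exp (2 * β * x) * (W' x ⬝ᵥ E *ᵥ W' x + W x ⬝ᵥ B *ᵥ W x)

noncomputable def weightedSq (β : ℝ) (f : ℝ → ι → ℝ) (x : ℝ) : ℝ :=
  Real.exp (2 * β * x) * (f x ⬝ᵥ f x)

def ellipticOp (E B : Matrix ι ι ℝ) (W W'' : ℝ → ι → ℝ) (x : ℝ) : ι → ℝ :=
  -(E *ᵥ W'' x) + B *ᵥ W x

variable {E B : Matrix ι ι ℝ} {β₀ β : ℝ} {V V' V'' : ℝ → ι → ℝ}

lemma ContinuousOn.weightedEnergy {s : Set ℝ} {W W' : ℝ → ι → ℝ} (hW : ContinuousOn W s)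
    (hW' : ContinuousOn W' s) : ContinuousOn (weightedEnergy E B β W W') s := by
  unfold _root_.weightedEnergy; fun_prop

lemma ContinuousOn.weightedSq {s : Set ℝ} {f : ℝ → ι → ℝ} (hf : ContinuousOn f s) :
    ContinuousOn (weightedSq β f) s := by
  unfold _root_.weightedSq; fun_prop

lemma weightedSq_nonneg (f : ℝ → ι → ℝ) (x : ℝ) : 0 ≤ weightedSq β f x :=
  mul_nonneg (Real.exp_pos _).le (dotProduct_self_nonneg _)

lemma hasDerivAt_energyFlux {x : ℝ} (hV : HasDerivAt V (V' x) x)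
    (hV' : HasDerivAt V' (V'' x) x) :
    HasDerivAt (fun y => Real.exp (2 * β * y) * (V y ⬝ᵥ E *ᵥ V' y))
      (weightedEnergy E B β V V' x + Real.exp (2 * β * x) *
        (2 * β * (V x ⬝ᵥ E *ᵥ V' x) - V x ⬝ᵥ ellipticOp E B V V'' x)) x := by
  have hexp := ((hasDerivAt_id x).const_mul (2 * β)).exp
  refine (hexp.fun_mul (hV.dotProduct (hV'.matrix_mulVec E))).congr_deriv ?_
  simp only [weightedEnergy, ellipticOp, dotProduct_add, dotProduct_neg, id]
  ring

lemma two_mul_dotProduct_mulVec_le_energy (hEs : E.IsSymm) (hE : ∀ z, 0 ≤ z ⬝ᵥ E *ᵥ z)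
    (hEB : ∀ z, β₀ ^ 2 * (z ⬝ᵥ E *ᵥ z) ≤ z ⬝ᵥ B *ᵥ z) (a b : ι → ℝ) :
    2 * β₀ * (a ⬝ᵥ E *ᵥ b) ≤ b ⬝ᵥ E *ᵥ b + a ⬝ᵥ B *ᵥ a := by
  linarith [two_mul_mul_dotProduct_mulVec_le hEs hE β₀ a b, hEB a]

lemma energyFlux_deriv_le (hEs : E.IsSymm) (hE : ∀ z, 0 ≤ z ⬝ᵥ E *ᵥ z)
    (hEB : ∀ z, β₀ ^ 2 * (z ⬝ᵥ E *ᵥ z) ≤ z ⬝ᵥ B *ᵥ z)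
    (hB : ∀ z, β₀ ^ 2 * (z ⬝ᵥ z) ≤ z ⬝ᵥ B *ᵥ z) (hβ : 0 ≤ β) (hββ₀ : β ≤ β₀) (a b c : ι → ℝ) :
    2 * β₀ * (β₀ - β) * (a ⬝ᵥ c - 2 * β * (a ⬝ᵥ E *ᵥ b)) ≤
      (β₀ - β) * (β₀ + β) * (b ⬝ᵥ E *ᵥ b + a ⬝ᵥ B *ᵥ a) + c ⬝ᵥ c := by
  have hs : 0 ≤ β₀ - β := sub_nonneg.2 hββ₀
  have hac := two_mul_mul_dotProduct_le (β₀ * (β₀ - β)) a c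
  have hab := two_mul_dotProduct_mulVec_le_energy hEs hE hEB (-a) b
  simp only [mulVec_neg, neg_dotProduct, dotProduct_neg, neg_neg] at hab
  nlinarith [mul_le_mul_of_nonneg_left (hB a) (sq_nonneg (β₀ - β)),
    mul_le_mul_of_nonneg_left hab (mul_nonneg hβ hs), mul_nonneg (mul_nonneg hs hs) (hE b)]

lemma mul_intervalIntegral_weightedEnergy_le (hEs : E.IsSymm) (hE : ∀ z, 0 ≤ z ⬝ᵥ E *ᵥ z)
    (hEB : ∀ z, β₀ ^ 2 * (z ⬝ᵥ E *ᵥ z) ≤ z ⬝ᵥ B *ᵥ z)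
    (hB : ∀ z, β₀ ^ 2 * (z ⬝ᵥ z) ≤ z ⬝ᵥ B *ᵥ z) (hβ : 0 ≤ β) (hββ₀ : β ≤ β₀)
    (hV : ∀ x, 0 ≤ x → HasDerivAt V (V' x) x) (hV' : ∀ x, 0 ≤ x → HasDerivAt V' (V'' x) x)
    (hV''c : ContinuousOn V'' (Ici 0)) (hV0 : V 0 = 0)
    (hFint : IntegrableOn (weightedSq β (ellipticOp E B V V'')) (Ioi 0)) {R : ℝ} (hR : 0 ≤ R) :
    (β₀ - β) ^ 2 * ∫ x in 0..R, weightedEnergy E B β V V' x ≤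
      (β₀ - β) * weightedEnergy E B β V V' R +
        ∫ x in Ioi 0, weightedSq β (ellipticOp E B V V'') x := by
  set AV := weightedEnergy E B β V V'
  set FT := weightedSq β (ellipticOp E B V V'')
  set RS := fun x => Real.exp (2 * β * x) *
    (2 * β * (V x ⬝ᵥ E *ᵥ V' x) - V x ⬝ᵥ ellipticOp E B V V'' x)
  set Φ := fun x => Real.exp (2 * β * x) * (V x ⬝ᵥ E *ᵥ V' x)
  have hVc := continuousOn_of_hasDerivAt hV
  have hV'c := continuousOn_of_hasDerivAt hV'
  have hsub : uIcc 0 R ⊆ Ici 0 := by rw [uIcc_of_le hR]; exact Icc_subset_Ici_self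
  have hAV : IntervalIntegrable AV volume 0 R :=
    ((hVc.weightedEnergy hV'c).mono hsub).intervalIntegrable
  have hRS : IntervalIntegrable RS volume 0 R := by
    refine ContinuousOn.intervalIntegrable (ContinuousOn.mono ?_ hsub)
    simp only [RS, ellipticOp]; fun_prop
  have hFT : IntervalIntegrable FT volume 0 R := by
    refine (ContinuousOn.weightedSq ?_ |>.mono hsub).intervalIntegrable
    unfold ellipticOp; fun_prop
  have hflux : (∫ x in 0..R, AV x) + ∫ x in 0..R, RS x = Φ R := by
    rw [← intervalIntegral.integral_add hAV hRS, intervalIntegral.integral_eq_sub_of_hasDerivAt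
      (fun x hx => hasDerivAt_energyFlux (hV x (hsub hx)) (hV' x (hsub hx))) (hAV.add hRS)]
    simp [Φ, hV0]
  have hΦ : 2 * β₀ * Φ R ≤ AV R := by
    have := two_mul_dotProduct_mulVec_le_energy hEs hE hEB (V R) (V' R)
    simp only [Φ, AV, weightedEnergy]
    nlinarith [Real.exp_pos (2 * β * R)]
  have hRS_le : ∫ x in 0..R, 2 * β₀ * (β₀ - β) * -RS x ≤
      ∫ x in 0..R, ((β₀ - β) * (β₀ + β) * AV x + FT x) := by
    refine intervalIntegral.integral_mono_on hR (hRS.neg.const_mul _)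
      ((hAV.const_mul _).add hFT) fun x _ => ?_
    have := energyFlux_deriv_le hEs hE hEB hB hβ hββ₀ (V x) (V' x) (ellipticOp E B V V'' x)
    simp only [RS, AV, FT, weightedEnergy, weightedSq]
    nlinarith [Real.exp_pos (2 * β * x)]
  have hFT_le : ∫ x in 0..R, FT x ≤ ∫ x in Ioi 0, FT x := by
    rw [intervalIntegral.integral_of_le hR]
    exact setIntegral_mono_set hFint (ae_of_all _ (weightedSq_nonneg _))
      Ioc_subset_Ioi_self.eventuallyLE
  rw [intervalIntegral.integral_const_mul, intervalIntegral.integral_neg,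
    intervalIntegral.integral_add (hAV.const_mul _) hFT,
    intervalIntegral.integral_const_mul, ← sub_eq_of_eq_add' hflux.symm] at hRS_le
  linear_combination hRS_le + mul_le_mul_of_nonneg_left hΦ (sub_nonneg.2 hββ₀) + hFT_le

theorem energy_estimate (hEs : E.IsSymm) (hE : ∀ z, 0 ≤ z ⬝ᵥ E *ᵥ z)
    (hEB : ∀ z, β₀ ^ 2 * (z ⬝ᵥ E *ᵥ z) ≤ z ⬝ᵥ B *ᵥ z)
    (hB : ∀ z, β₀ ^ 2 * (z ⬝ᵥ z) ≤ z ⬝ᵥ B *ᵥ z) (hβ : 0 ≤ β) (hββ₀ : β ≤ β₀)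
    (hV : ∀ x, 0 ≤ x → HasDerivAt V (V' x) x) (hV' : ∀ x, 0 ≤ x → HasDerivAt V' (V'' x) x)
    (hV''c : ContinuousOn V'' (Ici 0)) (hV0 : V 0 = 0)
    (hVint : IntegrableOn (weightedEnergy E B β V V') (Ioi 0))
    (hFint : IntegrableOn (weightedSq β (ellipticOp E B V V'')) (Ioi 0)) :
    (β₀ - β) ^ 2 * ∫ x in Ioi 0, weightedEnergy E B β V V' x ≤
      ∫ x in Ioi 0, weightedSq β (ellipticOp E B V V'') x :=
  mul_integral_Ioi_le_of_intervalIntegral_le hVint fun _ hR =>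
    mul_intervalIntegral_weightedEnergy_le hEs hE hEB hB hβ hββ₀ hV hV' hV''c hV0 hFint hR

lemma weightedEnergy_nonneg (hE : ∀ z, 0 ≤ z ⬝ᵥ E *ᵥ z) (hB : ∀ z, 0 ≤ z ⬝ᵥ B *ᵥ z)
    (W W' : ℝ → ι → ℝ) (x : ℝ) : 0 ≤ weightedEnergy E B β W W' x :=
  mul_nonneg (Real.exp_pos _).le (add_nonneg (hE _) (hB _))

lemma weightedEnergy_add_le (hE : ∀ z, 0 ≤ z ⬝ᵥ E *ᵥ z) (hB : ∀ z, 0 ≤ z ⬝ᵥ B *ᵥ z)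
    (V V' G G' : ℝ → ι → ℝ) (x : ℝ) :
    weightedEnergy E B β (V + G) (V' + G') x ≤
      2 * weightedEnergy E B β V V' x + 2 * weightedEnergy E B β G G' x := by
  have h₁ := add_dotProduct_mulVec_add_le hE (V' x) (G' x)
  have h₂ := add_dotProduct_mulVec_add_le hB (V x) (G x)
  simp only [weightedEnergy, Pi.add_apply]
  nlinarith [Real.exp_pos (2 * β * x)]

lemma weightedEnergy_sub_le (hE : ∀ z, 0 ≤ z ⬝ᵥ E *ᵥ z) (hB : ∀ z, 0 ≤ z ⬝ᵥ B *ᵥ z)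
    (U U' G G' : ℝ → ι → ℝ) (x : ℝ) :
    weightedEnergy E B β (U - G) (U' - G') x ≤
      2 * weightedEnergy E B β U U' x + 2 * weightedEnergy E B β G G' x := by
  have h₁ := sub_dotProduct_mulVec_sub_le hE (U' x) (G' x)
  have h₂ := sub_dotProduct_mulVec_sub_le hB (U x) (G x)
  simp only [weightedEnergy, Pi.sub_apply]
  nlinarith [Real.exp_pos (2 * β * x)]

lemma weightedSq_sub_le (f g : ℝ → ι → ℝ) (x : ℝ) :
    weightedSq β (f - g) x ≤ 2 * weightedSq β f x + 2 * weightedSq β g x := by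
  have h := sub_dotProduct_sub_le (f x) (g x)
  simp only [weightedSq, Pi.sub_apply]
  nlinarith [Real.exp_pos (2 * β * x)]

lemma ellipticOp_sub (U G U'' G'' : ℝ → ι → ℝ) (x : ℝ) :
    ellipticOp E B (U - G) (U'' - G'') x = ellipticOp E B U U'' x - ellipticOp E B G G'' x := by
  simp only [ellipticOp, Pi.sub_apply, mulVec_sub]
  abel

lemma weightedEnergy_exp_smul (c : ℝ) (v v' : ι → ℝ) (x : ℝ) :
    weightedEnergy E B β (fun y => Real.exp (c * y) • v) (fun y => Real.exp (c * y) • v') x =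
      Real.exp ((2 * β + 2 * c) * x) * (v' ⬝ᵥ E *ᵥ v' + v ⬝ᵥ B *ᵥ v) := by
  simp only [weightedEnergy, mulVec_smul, smul_dotProduct, dotProduct_smul, smul_eq_mul]
  rw [show (2 * β + 2 * c) * x = 2 * β * x + c * x + c * x by ring, Real.exp_add, Real.exp_add]
  ring

lemma weightedSq_ellipticOp_exp_smul (c : ℝ) (v v'' : ι → ℝ) (x : ℝ) :
    weightedSq β (ellipticOp E B (fun y => Real.exp (c * y) • v)
        (fun y => Real.exp (c * y) • v'')) x =
      Real.exp ((2 * β + 2 * c) * x) * ((-(E *ᵥ v'') + B *ᵥ v) ⬝ᵥ (-(E *ᵥ v'') + B *ᵥ v)) := by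
  simp only [weightedSq, ellipticOp, mulVec_smul, ← smul_neg, ← smul_add, smul_dotProduct,
    dotProduct_smul, smul_eq_mul]
  rw [show (2 * β + 2 * c) * x = 2 * β * x + c * x + c * x by ring, Real.exp_add, Real.exp_add]
  ring

lemma integrableOn_and_integral_exp_mul_le {a K : ℝ} (ha : a ≤ -2) (hK : 0 ≤ K) :
    IntegrableOn (fun x => Real.exp (a * x) * K) (Ioi 0) ∧
      ∫ x in Ioi 0, Real.exp (a * x) * K ≤ K / 2 := by
  refine ⟨(integrableOn_exp_mul_Ioi (by linarith) 0).mul_const K, ?_⟩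
  rw [integral_mul_const, integral_exp_mul_Ioi (by linarith), mul_zero, Real.exp_zero,
    div_mul_eq_mul_div, show -1 * K / a = K / -a by ring]
  exact div_le_div_of_nonneg_left hK two_pos (by linarith)

theorem energy_estimate_of_lift (hEs : E.IsSymm) (hE : ∀ z, 0 ≤ z ⬝ᵥ E *ᵥ z)
    (hEB : ∀ z, β₀ ^ 2 * (z ⬝ᵥ E *ᵥ z) ≤ z ⬝ᵥ B *ᵥ z)
    (hB : ∀ z, β₀ ^ 2 * (z ⬝ᵥ z) ≤ z ⬝ᵥ B *ᵥ z) (hβ : 0 ≤ β) (hββ₀ : β ≤ β₀)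
    {f : ℝ → ι → ℝ} (hf : IntegrableOn (weightedSq β f) (Ioi 0))
    {U U' U'' G G' G'' : ℝ → ι → ℝ} (hU : ∀ x, 0 ≤ x → HasDerivAt U (U' x) x)
    (hU' : ∀ x, 0 ≤ x → HasDerivAt U' (U'' x) x) (hU''c : ContinuousOn U'' (Ici 0))
    (hUf : ∀ x, 0 < x → ellipticOp E B U U'' x = f x)
    (hUint : IntegrableOn (weightedEnergy E B β U U') (Ioi 0))
    (hG : ∀ x, HasDerivAt G (G' x) x) (hG' : ∀ x, HasDerivAt G' (G'' x) x)
    (hG''c : ContinuousOn G'' (Ici 0)) (hG0 : G 0 = U 0)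
    (hGint : IntegrableOn (weightedEnergy E B β G G') (Ioi 0))
    (hGFint : IntegrableOn (weightedSq β (ellipticOp E B G G'')) (Ioi 0)) :
    (β₀ - β) ^ 2 * ∫ x in Ioi 0, weightedEnergy E B β U U' x ≤
      4 * (∫ x in Ioi 0, weightedSq β f x) +
        4 * (∫ x in Ioi 0, weightedSq β (ellipticOp E B G G'') x) +
        2 * (β₀ - β) ^ 2 * ∫ x in Ioi 0, weightedEnergy E B β G G' x := by
  have hBnn : ∀ z, 0 ≤ z ⬝ᵥ B *ᵥ z := fun z =>
    (mul_nonneg (sq_nonneg β₀) (dotProduct_self_nonneg z)).trans (hB z)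
  have hV : ∀ x, 0 ≤ x → HasDerivAt (U - G) ((U' - G') x) x := fun x hx => (hU x hx).sub (hG x)
  have hV' : ∀ x, 0 ≤ x → HasDerivAt (U' - G') ((U'' - G'') x) x :=
    fun x hx => (hU' x hx).sub (hG' x)
  have hV0 : (U - G) 0 = 0 := sub_eq_zero.2 hG0.symm
  have hVc := continuousOn_of_hasDerivAt hV
  have hV''c := hU''c.sub hG''c
  obtain ⟨hFint, hFle⟩ := integrableOn_Ioi_and_integral_le_of_le
    (h := weightedSq β (ellipticOp E B (U - G) (U'' - G'')))
    (ContinuousOn.weightedSq (by unfold ellipticOp; fun_prop)) (weightedSq_nonneg _) hf hGFint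
    fun x hx => by
      have := weightedSq_sub_le (β := β) f (ellipticOp E B G G'') x
      simpa only [weightedSq, ellipticOp_sub, hUf x hx, Pi.sub_apply] using this
  obtain ⟨hVint, -⟩ := integrableOn_Ioi_and_integral_le_of_le
    (h := weightedEnergy E B β (U - G) (U' - G'))
    (hVc.weightedEnergy (continuousOn_of_hasDerivAt hV'))
    (weightedEnergy_nonneg hE hBnn _ _) hUint hGint
    fun x _ => weightedEnergy_sub_le hE hBnn U U' G G' x
  have hVest := energy_estimate hEs hE hEB hB hβ hββ₀ hV hV' hV''c hV0 hVint hFint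
  obtain ⟨-, hUle⟩ := integrableOn_Ioi_and_integral_le_of_le (h := weightedEnergy E B β U U')
    ((continuousOn_of_hasDerivAt hU).weightedEnergy (continuousOn_of_hasDerivAt hU'))
    (weightedEnergy_nonneg hE hBnn _ _) hVint hGint fun x _ => by
      simpa using weightedEnergy_add_le hE hBnn (U - G) (U' - G') G G' x
  nlinarith [mul_le_mul_of_nonneg_left hUle (sq_nonneg (β₀ - β))]

theorem energy_estimate_of_boundary (hEs : E.IsSymm) (hE : ∀ z, 0 ≤ z ⬝ᵥ E *ᵥ z)
    (hEB : ∀ z, β₀ ^ 2 * (z ⬝ᵥ E *ᵥ z) ≤ z ⬝ᵥ B *ᵥ z)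
    (hB : ∀ z, β₀ ^ 2 * (z ⬝ᵥ z) ≤ z ⬝ᵥ B *ᵥ z) (hβ : 0 ≤ β) (hββ₀ : β ≤ β₀)
    {L : ℝ} (hL : β + 1 ≤ L) {f : ℝ → ι → ℝ} (hf : IntegrableOn (weightedSq β f) (Ioi 0))
    {g : ι → ℝ} {U U' U'' : ℝ → ι → ℝ} (hU : ∀ x, 0 ≤ x → HasDerivAt U (U' x) x)
    (hU' : ∀ x, 0 ≤ x → HasDerivAt U' (U'' x) x) (hU''c : ContinuousOn U'' (Ici 0))
    (hUf : ∀ x, 0 < x → ellipticOp E B U U'' x = f x) (hU0 : U 0 = g)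
    (hUint : IntegrableOn (weightedEnergy E B β U U') (Ioi 0)) :
    (β₀ - β) ^ 2 * ∫ x in Ioi 0, weightedEnergy E B β U U' x ≤
      4 * (∫ x in Ioi 0, weightedSq β f x) +
        2 * ((-(E *ᵥ (L ^ 2 • g)) + B *ᵥ g) ⬝ᵥ (-(E *ᵥ (L ^ 2 • g)) + B *ᵥ g)) +
        β₀ ^ 2 * (L ^ 2 * (g ⬝ᵥ E *ᵥ g) + g ⬝ᵥ B *ᵥ g) := by
  have hBnn : ∀ z, 0 ≤ z ⬝ᵥ B *ᵥ z := fun z =>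
    (mul_nonneg (sq_nonneg β₀) (dotProduct_self_nonneg z)).trans (hB z)
  set G := fun y => Real.exp (-L * y) • g
  set G' := fun y => Real.exp (-L * y) • (-L • g)
  set G'' := fun y => Real.exp (-L * y) • (-L • -L • g)
  have hexp : 2 * β + 2 * -L ≤ -2 := by linarith
  obtain ⟨hGint, hGle⟩ : IntegrableOn (weightedEnergy E B β G G') (Ioi 0) ∧
      ∫ x in Ioi 0, weightedEnergy E B β G G' x ≤ (L ^ 2 * (g ⬝ᵥ E *ᵥ g) + g ⬝ᵥ B *ᵥ g) / 2 := by
    rw [funext (weightedEnergy_exp_smul (-L) g (-L • g))]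
    convert integrableOn_and_integral_exp_mul_le hexp (add_nonneg (hE _) (hBnn g)) using 3
    simp only [mulVec_smul, smul_dotProduct, dotProduct_smul, smul_eq_mul]
    ring
  obtain ⟨hGFint, hGFle⟩ : IntegrableOn (weightedSq β (ellipticOp E B G G'')) (Ioi 0) ∧
      ∫ x in Ioi 0, weightedSq β (ellipticOp E B G G'') x ≤
        ((-(E *ᵥ (L ^ 2 • g)) + B *ᵥ g) ⬝ᵥ (-(E *ᵥ (L ^ 2 • g)) + B *ᵥ g)) / 2 := by
    rw [funext (weightedSq_ellipticOp_exp_smul (-L) g (-L • -L • g))]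
    convert integrableOn_and_integral_exp_mul_le hexp (dotProduct_self_nonneg _) using 3
    simp only [smul_smul, neg_mul_neg, sq]
  have hlift := energy_estimate_of_lift hEs hE hEB hB hβ hββ₀ hf hU hU' hU''c hUf hUint
    (hasDerivAt_exp_mul_smul (-L) g) (hasDerivAt_exp_mul_smul (-L) (-L • g)) (by fun_prop)
    (by simp [hU0]) hGint hGFint
  have hGnn : 0 ≤ ∫ x in Ioi 0, weightedEnergy E B β G G' x :=
    setIntegral_nonneg measurableSet_Ioi fun x _ => weightedEnergy_nonneg hE hBnn _ _ x
  have hs : (β₀ - β) ^ 2 ≤ β₀ ^ 2 := by nlinarith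
  nlinarith [mul_le_mul_of_nonneg_right hs hGnn]

end WeightedEnergy

lemma sqrt_le_of_sq_mul_le {X D s F N : ℝ} (hs : 0 < s) (hD : 0 ≤ D) (hF : 0 ≤ F) (hN : 0 ≤ N)
    (h : s ^ 2 * X ≤ D * (F + N)) : √X ≤ √D * s⁻¹ * (√F + √N) := by
  have hsum : F + N ≤ (√F + √N) ^ 2 := by
    nlinarith [Real.sq_sqrt hF, Real.sq_sqrt hN, Real.sqrt_nonneg F, Real.sqrt_nonneg N]
  refine Real.sqrt_le_iff.2 ⟨by positivity, ?_⟩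
  rw [mul_pow, mul_pow, Real.sq_sqrt hD, inv_pow, ← div_eq_mul_inv, div_mul_eq_mul_div,
    le_div_iff₀ (by positivity)]
  nlinarith [mul_le_mul_of_nonneg_left hsum hD]

section Emat

variable {ν : ℝ}

lemma isSymm_Emat (ν : ℝ) : (Emat ν).IsSymm := by
  ext i j; fin_cases i <;> fin_cases j <;> rfl

lemma dotProduct_Emat_mulVec (a b : Fin 2 → ℝ) :
    a ⬝ᵥ Emat ν *ᵥ b = ν ^ 2 * (a 0 * b 0) + a 1 * b 1 := by
  simp [Emat, dotProduct, mulVec, Fin.sum_univ_two]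
  ring

lemma dotProduct_Emat_mulVec_self_nonneg (a : Fin 2 → ℝ) : 0 ≤ a ⬝ᵥ Emat ν *ᵥ a := by
  rw [dotProduct_Emat_mulVec]
  nlinarith [mul_nonneg (sq_nonneg ν) (mul_self_nonneg (a 0)), mul_self_nonneg (a 1)]

lemma dotProduct_Emat_mulVec_self_le (hν : ν ^ 2 ≤ 1) (a : Fin 2 → ℝ) :
    a ⬝ᵥ Emat ν *ᵥ a ≤ a ⬝ᵥ a := by
  rw [dotProduct_Emat_mulVec]
  simp only [dotProduct, Fin.sum_univ_two]
  nlinarith [mul_self_nonneg (a 0)]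

lemma Emat_mulVec_dotProduct_self_le (hν : ν ^ 2 ≤ 1) (a : Fin 2 → ℝ) :
    (Emat ν *ᵥ a) ⬝ᵥ (Emat ν *ᵥ a) ≤ a ⬝ᵥ a := by
  simp [Emat, dotProduct, mulVec, Fin.sum_univ_two]
  nlinarith [mul_self_nonneg (a 0), sq_nonneg ν, mul_nonneg (sq_nonneg ν) (mul_self_nonneg (a 0))]

lemma boundary_terms_le (hν : ν ^ 2 ≤ 1) (β₀ L : ℝ) (B : Matrix (Fin 2) (Fin 2) ℝ)
    (g : Fin 2 → ℝ) :
    2 * ((-(Emat ν *ᵥ (L ^ 2 • g)) + B *ᵥ g) ⬝ᵥ (-(Emat ν *ᵥ (L ^ 2 • g)) + B *ᵥ g)) +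
        β₀ ^ 2 * (L ^ 2 * (g ⬝ᵥ Emat ν *ᵥ g) + g ⬝ᵥ B *ᵥ g) ≤
      (4 * L ^ 4 + 4 * (∑ i, ∑ j, B i j ^ 2) + β₀ ^ 2 * (L ^ 2 + 1 + ∑ i, ∑ j, B i j ^ 2)) *
        (g ⬝ᵥ g) := by
  have hw := add_dotProduct_add_le (-(Emat ν *ᵥ (L ^ 2 • g))) (B *ᵥ g)
  have hEg : (-(Emat ν *ᵥ (L ^ 2 • g))) ⬝ᵥ (-(Emat ν *ᵥ (L ^ 2 • g))) =
      L ^ 4 * ((Emat ν *ᵥ g) ⬝ᵥ (Emat ν *ᵥ g)) := by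
    simp only [mulVec_smul, neg_dotProduct, dotProduct_neg, smul_dotProduct,
      dotProduct_smul, smul_eq_mul]
    ring
  have hN := dotProduct_self_nonneg g
  have hK : 0 ≤ ∑ i, ∑ j, B i j ^ 2 := by positivity
  nlinarith [mul_le_mul_of_nonneg_left (Emat_mulVec_dotProduct_self_le hν g)
      (pow_nonneg (sq_nonneg L) 2),
    mul_le_mul_of_nonneg_left (dotProduct_Emat_mulVec_self_le hν g)
      (mul_nonneg (sq_nonneg β₀) (sq_nonneg L)),
    mul_le_mul_of_nonneg_left (dotProduct_mulVec_le B g) (sq_nonneg β₀),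
    mulVec_dotProduct_mulVec_le B g,
    mul_nonneg (sq_nonneg β₀) (mul_nonneg hK hN)]

end Emat

theorem stmt_14_general (β₀ : ℝ)
    (B : Matrix (Fin 2) (Fin 2) ℝ)
    (hB : ∀ x : Fin 2 → ℝ, β₀ ^ 2 * (x ⬝ᵥ x) ≤ x ⬝ᵥ (B *ᵥ x)) :
    ∃ C : ℝ, 0 < C ∧
      ∀ ν : ℝ, 0 < ν → ν ≤ 1 →
      ∀ β : ℝ, 0 ≤ β → β < β₀ →
      ∀ f : ℝ → Fin 2 → ℝ,
        IntegrableOn (fun x => Real.exp (2 * β * x) * (f x ⬝ᵥ f x)) (Ioi 0) →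
      ∀ g : Fin 2 → ℝ,
      ∀ U U' U'' : ℝ → Fin 2 → ℝ,
        (∀ x : ℝ, 0 ≤ x → HasDerivAt U (U' x) x) →
        (∀ x : ℝ, 0 ≤ x → HasDerivAt U' (U'' x) x) →
        ContinuousOn U'' (Ici 0) →
        (∀ x : ℝ, 0 < x → -(Emat ν *ᵥ U'' x) + B *ᵥ U x = f x) →
        U 0 = g →
        IntegrableOn (fun x => Real.exp (2 * β * x) *
          (U' x ⬝ᵥ (Emat ν *ᵥ U' x) + U x ⬝ᵥ (B *ᵥ U x))) (Ioi 0) →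
        Real.sqrt (wnormSq ν B β U U') ≤
          C * (β₀ - β)⁻¹ *
            (Real.sqrt (∫ x in Ioi (0:ℝ), Real.exp (2 * β * x) * (f x ⬝ᵥ f x)) +
              Real.sqrt (g ⬝ᵥ g)) := by
  set K := ∑ i, ∑ j, B i j ^ 2 with hK
  have hK0 : 0 ≤ K := by positivity
  set c := 4 * (β₀ + 1) ^ 4 + 4 * K + β₀ ^ 2 * ((β₀ + 1) ^ 2 + 1 + K) with hc
  have hc0 : 0 ≤ c := by positivity
  refine ⟨√(4 + c), Real.sqrt_pos.2 (by linarith), ?_⟩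
  intro ν hν hν1 β hβ hββ₀ f hf g U U' U'' hU hU' hU''c hUf hU0 hUint
  have hν2 : ν ^ 2 ≤ 1 := by nlinarith
  have hEB (z : Fin 2 → ℝ) : β₀ ^ 2 * (z ⬝ᵥ Emat ν *ᵥ z) ≤ z ⬝ᵥ B *ᵥ z :=
    (mul_le_mul_of_nonneg_left (dotProduct_Emat_mulVec_self_le hν2 z) (sq_nonneg β₀)).trans (hB z)
  have hest := energy_estimate_of_boundary (isSymm_Emat ν) dotProduct_Emat_mulVec_self_nonneg hEB
    hB hβ hββ₀.le (L := β₀ + 1) (by linarith) hf hU hU' hU''c hUf hU0 hUint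
  have hF : 0 ≤ ∫ x in Ioi 0, weightedSq β f x :=
    setIntegral_nonneg measurableSet_Ioi fun x _ => weightedSq_nonneg f x
  refine sqrt_le_of_sq_mul_le (by linarith) (by linarith) hF (dotProduct_self_nonneg g) ?_
  have hg := boundary_terms_le hν2 β₀ (β₀ + 1) B g
  rw [← hK, ← hc] at hg
  change (β₀ - β) ^ 2 * ∫ x in Ioi 0, weightedEnergy (Emat ν) B β U U' x ≤
    (4 + c) * ((∫ x in Ioi 0, weightedSq β f x) + g ⬝ᵥ g)
  nlinarith [mul_nonneg hc0 hF, dotProduct_self_nonneg g]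

/-- A priori estimate in exponentially weighted spaces on `(0,∞)` for the
elliptic system `-EU'' + BU = f`, `U(0) = g`: there is a constant `C > 0`
depending only on `β₀` and `B` (independent of `β`, `ν`, `f`, `g`) with
`‖U‖_{1,β} ≤ C(β₀-β)⁻¹(‖f‖_{0,β} + ‖g‖)`. -/
theorem stmt_14 (β₀ : ℝ) (hβ₀ : 0 < β₀)
    (B : Matrix (Fin 2) (Fin 2) ℝ)
    (hB : ∀ x : Fin 2 → ℝ, β₀ ^ 2 * (x ⬝ᵥ x) ≤ x ⬝ᵥ (B *ᵥ x)) :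
    ∃ C : ℝ, 0 < C ∧
      ∀ ν : ℝ, 0 < ν → ν ≤ 1 →
      ∀ β : ℝ, 0 ≤ β → β < β₀ →
      ∀ f : ℝ → Fin 2 → ℝ,
        IntegrableOn (fun x => Real.exp (2 * β * x) * (f x ⬝ᵥ f x)) (Ioi 0) →
      ∀ g : Fin 2 → ℝ,
      ∀ U U' U'' : ℝ → Fin 2 → ℝ,
        (∀ x : ℝ, 0 ≤ x → HasDerivAt U (U' x) x) →
        (∀ x : ℝ, 0 ≤ x → HasDerivAt U' (U'' x) x) →
        ContinuousOn U'' (Ici 0) →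
        (∀ x : ℝ, 0 < x → -(Emat ν *ᵥ U'' x) + B *ᵥ U x = f x) →
        U 0 = g →
        IntegrableOn (fun x => Real.exp (2 * β * x) *
          (U' x ⬝ᵥ (Emat ν *ᵥ U' x) + U x ⬝ᵥ (B *ᵥ U x))) (Ioi 0) →
        Real.sqrt (wnormSq ν B β U U') ≤
          C * (β₀ - β)⁻¹ *
            (Real.sqrt (∫ x in Ioi (0:ℝ), Real.exp (2 * β * x) * (f x ⬝ᵥ f x)) +
              Real.sqrt (g ⬝ᵥ g)) :=
  stmt_14_general β₀ B hB
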